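/- Let G be a loopless finite connected graph with a bridge e with endpoints v1, v2 and components G1, G2 of G ∖ {e}. Suppose d is a divisor on G supported away from neither side, with restrictions d1, d2, and suppose for i = 1,2 there exist effective divisors e_i on G_i of degree r_i + 1 (where r_i = r_{G_i}(d_i)) with r_{G_i}(d_i − e_i) = −1. Then r_G(d − j1(e1) − j2(e2)) = −1, where j_i denotes the pushforward of divisors along the inclusion V(G_i) ⊆ V(G). Consequently r_G(d) ≤ r_{G1}(d1) + r_{G2}(d2) + 1. -/

import Mathlib

open scoped Classical

namespace BN

/-- A finite multigraph: `E u v` is the number of edges (other than loops)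
between distinct vertices `u` and `v`, and `loops v` is the number of loops at `v`. -/
structure MultiGraph (V : Type) where
  E : V → V → ℕ
  loops : V → ℕ
  symm : ∀ u v, E u v = E v u
  noDiag : ∀ v, E v v = 0

variable {V V1 V2 : Type}

/-- The divisor `[v]`. -/
def one [DecidableEq V] (v : V) : V → ℤ := fun w => if w = v then 1 else 0

/-- Degree of a divisor. -/
def deg [Fintype V] (d : V → ℤ) : ℤ := ∑ v, d v

/-- Effective divisor. -/
def Effective (d : V → ℤ) : Prop := ∀ v, 0 ≤ d v

namespace MultiGraph

/-- Divisor of a rational function (loops contribute nothing). -/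
def div [Fintype V] (G : MultiGraph V) (f : V → ℤ) : V → ℤ :=
  fun v => ∑ w, (G.E v w : ℤ) * (f w - f v)

def Principal [Fintype V] (G : MultiGraph V) (d : V → ℤ) : Prop :=
  ∃ f : V → ℤ, d = G.div f

def LinEquiv [Fintype V] (G : MultiGraph V) (d d' : V → ℤ) : Prop :=
  G.Principal (d' - d)

/-- `d` is linearly equivalent to an effective divisor. -/
def Winnable [Fintype V] (G : MultiGraph V) (d : V → ℤ) : Prop :=
  ∃ e : V → ℤ, Effective e ∧ G.LinEquiv d e

/-- The Baker–Norine rank of a divisor. -/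
noncomputable def rank [Fintype V] (G : MultiGraph V) (d : V → ℤ) : ℤ :=
  if G.Winnable d then
    (sSup {s : ℕ | ∀ e : V → ℤ, Effective e → deg e = (s : ℤ) → G.Winnable (d - e)} : ℕ)
  else -1

def Connected (G : MultiGraph V) : Prop :=
  ∀ u v : V, Relation.ReflTransGen (fun a b => 0 < G.E a b) u v

def Loopless (G : MultiGraph V) : Prop := ∀ v, G.loops v = 0

/-- Number of edges from `v` to vertices outside `A`. -/
def outdeg [Fintype V] [DecidableEq V] (G : MultiGraph V) (A : Finset V) (v : V) : ℕ :=
  ∑ w ∈ Finset.univ.filter (fun w => w ∉ A), G.E v w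

/-- `v0`-reduced divisor. -/
def Reduced [Fintype V] [DecidableEq V] (G : MultiGraph V) (v0 : V) (d : V → ℤ) : Prop :=
  (∀ v, v ≠ v0 → 0 ≤ d v) ∧
  ∀ A : Finset V, A.Nonempty → v0 ∉ A → ∃ v ∈ A, d v < (G.outdeg A v : ℤ)

def valence [Fintype V] (G : MultiGraph V) (v : V) : ℕ :=
  (∑ w, G.E v w) + 2 * G.loops v

/-- Canonical divisor. -/
def K [Fintype V] (G : MultiGraph V) : V → ℤ := fun v => (G.valence v : ℤ) - 2

def edgeCount [Fintype V] (G : MultiGraph V) : ℕ :=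
  (∑ v, ∑ w, G.E v w) / 2 + ∑ v, G.loops v

end MultiGraph

open MultiGraph

/-- The graph obtained by joining `G1` and `G2` by a single bridge from `v1` to `v2`. -/
def bridgeJoin [DecidableEq V1] [DecidableEq V2]
    (G1 : MultiGraph V1) (G2 : MultiGraph V2) (v1 : V1) (v2 : V2) :
    MultiGraph (V1 ⊕ V2) where
  E x y :=
    match x, y with
    | .inl a, .inl b => G1.E a b
    | .inr a, .inr b => G2.E a b
    | .inl a, .inr b => if a = v1 ∧ b = v2 then 1 else 0
    | .inr b, .inl a => if a = v1 ∧ b = v2 then 1 else 0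
  loops := Sum.elim G1.loops G2.loops
  symm := by rintro (a | a) (b | b) <;> simp [G1.symm, G2.symm]
  noDiag := by rintro (a | a) <;> simp [G1.noDiag, G2.noDiag]

/-- The virtual loopless graph `Ḡ•` of a vertex-weighted graph `(G, ω)`:
insert a vertex into each loop of `G` and add `ω v` subdivided loops at each `v`.
The inserted vertices are the pairs `⟨v, i⟩` with `i : Fin (G.loops v + ω v)`,
each joined to `v` by two parallel edges. -/
noncomputable def bullet (G : MultiGraph V) (ω : V → ℕ) :
    MultiGraph (V ⊕ (Σ v : V, Fin (G.loops v + ω v))) where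
  E x y :=
    match x, y with
    | .inl u, .inl v => G.E u v
    | .inl u, .inr w => if u = w.1 then 2 else 0
    | .inr w, .inl u => if u = w.1 then 2 else 0
    | .inr _, .inr _ => 0
  loops := fun _ => 0
  symm := by rintro (u | u) (v | v) <;> simp [G.symm]
  noDiag := by rintro (v | v) <;> simp [G.noDiag]

/-- The rank `r_Ḡ(d)` of a divisor on a vertex-weighted graph `(G, ω)`:
the Baker–Norine rank of `d` on `Ḡ•`. -/
noncomputable def wrank [Fintype V] [DecidableEq V] (G : MultiGraph V) (ω : V → ℕ)
    (d : V → ℤ) : ℤ :=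
  (bullet G ω).rank (Sum.elim d 0)

/-- `v` is a base-point of the complete linear system `|d|•` on `Ḡ•`. -/
def wBasePoint [Fintype V] [DecidableEq V] (G : MultiGraph V) (ω : V → ℕ)
    (d : V → ℤ) (v : V) : Prop :=
  wrank G ω (d - one v) = wrank G ω d

/-- Genus of a vertex-weighted graph. -/
def genus [Fintype V] (G : MultiGraph V) (ω : V → ℕ) : ℤ :=
  (G.edgeCount : ℤ) - Fintype.card V + 1 + ∑ v, (ω v : ℤ)

/-- A vertex-weighted graph of genus `≥ 2` is hyperelliptic if `Ḡ•` carries a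
divisor of degree `2` and rank `1`. -/
def Hyperelliptic [Fintype V] [DecidableEq V] (G : MultiGraph V) (ω : V → ℕ) : Prop :=
  2 ≤ genus G ω ∧ ∃ d, deg d = 2 ∧ (bullet G ω).rank d = 1

/-- The canonical divisor `K_Ḡ` of a vertex-weighted graph, viewed as a divisor on `G`. -/
noncomputable def wK [Fintype V] (G : MultiGraph V) (ω : V → ℕ) : V → ℤ :=
  fun v => (bullet G ω).K (Sum.inl v)

/-! A winning configuration for `d - j₁ e₁ - j₂ e₂` on the bridge join restricts, on the side
whose endpoint of the bridge carries the larger value of the rational function, to a winning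
configuration for `dᵢ - eᵢ` on `Gᵢ`: the bridge only ever removes chips from that side. Since
`d - j₁ e₁ - j₂ e₂` is thus not winnable and `j₁ e₁ + j₂ e₂` has degree `r₁ + r₂ + 2`, the rank
of `d` is at most `r₁ + r₂ + 1`. -/

lemma deg_nonneg [Fintype V] {d : V → ℤ} (hd : Effective d) : 0 ≤ deg d :=
  Finset.sum_nonneg fun v _ => hd v

lemma deg_add [Fintype V] (a b : V → ℤ) : deg (a + b) = deg a + deg b :=
  Finset.sum_add_distrib

lemma deg_sumElim [Fintype V1] [Fintype V2] (a : V1 → ℤ) (b : V2 → ℤ) :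
    deg (Sum.elim a b) = deg a + deg b :=
  Fintype.sum_sum_type _

lemma deg_smul_one [Fintype V] [DecidableEq V] (n : ℤ) (v : V) : deg (n • one v) = n := by
  simp [deg, one]

lemma Effective.add {a b : V → ℤ} (ha : Effective a) (hb : Effective b) : Effective (a + b) :=
  fun v => add_nonneg (ha v) (hb v)

lemma Effective.sumElim {a : V1 → ℤ} {b : V2 → ℤ} (ha : Effective a) (hb : Effective b) :
    Effective (Sum.elim a b) := by
  rintro (u | w)
  exacts [ha u, hb w]

lemma Effective.eq_zero_of_deg_eq_zero [Fintype V] {d : V → ℤ} (hd : Effective d)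
    (h : deg d = 0) : d = 0 :=
  funext fun v => (Finset.sum_eq_zero_iff_of_nonneg fun w _ => hd w).1 h v (Finset.mem_univ v)

lemma effective_natCast_smul_one [DecidableEq V] (n : ℕ) (v : V) :
    Effective ((n : ℤ) • one v) := by
  intro w
  simp only [Pi.smul_apply, one, smul_eq_mul]
  split_ifs <;> omega

namespace MultiGraph

variable [Fintype V] {G : MultiGraph V}

lemma winnable_iff_exists_effective_add_div {d : V → ℤ} :
    G.Winnable d ↔ ∃ f, Effective (d + G.div f) := by
  constructor
  · rintro ⟨e, he, f, hf⟩
    refine ⟨f, ?_⟩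
    rwa [← hf, add_sub_cancel]
  · rintro ⟨f, hf⟩
    exact ⟨d + G.div f, hf, f, add_sub_cancel_left _ _⟩

lemma Winnable.add_effective {d g : V → ℤ} (hd : G.Winnable d) (hg : Effective g) :
    G.Winnable (d + g) := by
  obtain ⟨f, hf⟩ := winnable_iff_exists_effective_add_div.1 hd
  refine winnable_iff_exists_effective_add_div.2 ⟨f, ?_⟩
  rw [add_right_comm]
  exact hf.add hg

lemma rank_eq_neg_one_iff {d : V → ℤ} : G.rank d = -1 ↔ ¬ G.Winnable d := by
  unfold rank
  split_ifs with hw <;> simp [hw]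

lemma rank_lt_deg_of_not_winnable_sub {d e : V → ℤ} (he : Effective e)
    (hde : ¬ G.Winnable (d - e)) : G.rank d < deg e := by
  unfold rank
  split_ifs with hd
  swap
  · linarith [deg_nonneg he]
  obtain ⟨v, -⟩ : ∃ v, e v ≠ 0 := by
    by_contra! he0
    exact hde (by simpa [show e = 0 from funext he0] using hd)
  set S := {s : ℕ | ∀ e : V → ℤ, Effective e → deg e = (s : ℤ) → G.Winnable (d - e)}
  -- A member `s ≥ deg e` of `S` would, after padding `e` with chips at `v`, make `d - e` winnable.
  have hS : ∀ s ∈ S, (s : ℤ) < deg e := by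
    intro s hs
    by_contra! hle
    set pad : V → ℤ := ((s - deg e).toNat : ℤ) • one v
    have hpad : Effective pad := effective_natCast_smul_one _ v
    have hwin := hs (e + pad) (he.add hpad) (by
      rw [deg_add, deg_smul_one]
      omega)
    exact hde (by simpa [sub_add_eq_sub_sub, sub_add_cancel] using hwin.add_effective hpad)
  have hS0 : 0 ∈ S := fun e' he' hdeg' => by
    simpa [he'.eq_zero_of_deg_eq_zero hdeg'] using hd
  have hbdd : BddAbove S := ⟨(deg e).toNat, fun s hs => by have := hS s hs; omega⟩
  exact hS _ (Nat.sSup_mem ⟨0, hS0⟩ hbdd)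

end MultiGraph

section BridgeJoin

variable [Fintype V1] [Fintype V2] [DecidableEq V1] [DecidableEq V2]
  (G1 : MultiGraph V1) (G2 : MultiGraph V2) (v1 : V1) (v2 : V2)

lemma bridgeJoin_div_inl (f : V1 ⊕ V2 → ℤ) (u : V1) :
    (bridgeJoin G1 G2 v1 v2).div f (Sum.inl u)
      = G1.div (f ∘ Sum.inl) u + if u = v1 then f (Sum.inr v2) - f (Sum.inl v1) else 0 := by
  simp only [MultiGraph.div, bridgeJoin, Fintype.sum_sum_type, Function.comp]
  congr 1
  by_cases h : u = v1 <;> simp [h, Finset.sum_ite_eq']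

lemma bridgeJoin_div_inr (f : V1 ⊕ V2 → ℤ) (w : V2) :
    (bridgeJoin G1 G2 v1 v2).div f (Sum.inr w)
      = G2.div (f ∘ Sum.inr) w + if w = v2 then f (Sum.inl v1) - f (Sum.inr v2) else 0 := by
  simp only [MultiGraph.div, bridgeJoin, Fintype.sum_sum_type, Function.comp]
  rw [add_comm (∑ _, _)]
  congr 1
  by_cases h : w = v2 <;> simp [h, Finset.sum_ite_eq', and_comm]

variable {G1 G2 v1 v2}

lemma Effective.restrict_inl_of_bridgeJoin {D1 : V1 → ℤ} {D2 : V2 → ℤ} {f : V1 ⊕ V2 → ℤ}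
    (h : Effective (Sum.elim D1 D2 + (bridgeJoin G1 G2 v1 v2).div f))
    (hf : f (Sum.inr v2) ≤ f (Sum.inl v1)) : Effective (D1 + G1.div (f ∘ Sum.inl)) := by
  intro u
  have hu := h (Sum.inl u)
  rw [Pi.add_apply, Sum.elim_inl, bridgeJoin_div_inl] at hu
  simp only [Pi.add_apply]
  split_ifs at hu <;> linarith

lemma Effective.restrict_inr_of_bridgeJoin {D1 : V1 → ℤ} {D2 : V2 → ℤ} {f : V1 ⊕ V2 → ℤ}
    (h : Effective (Sum.elim D1 D2 + (bridgeJoin G1 G2 v1 v2).div f))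
    (hf : f (Sum.inl v1) ≤ f (Sum.inr v2)) : Effective (D2 + G2.div (f ∘ Sum.inr)) := by
  intro w
  have hw := h (Sum.inr w)
  rw [Pi.add_apply, Sum.elim_inr, bridgeJoin_div_inr] at hw
  simp only [Pi.add_apply]
  split_ifs at hw <;> linarith

lemma not_winnable_bridgeJoin_sumElim {D1 : V1 → ℤ} {D2 : V2 → ℤ}
    (h1 : ¬ G1.Winnable D1) (h2 : ¬ G2.Winnable D2) :
    ¬ (bridgeJoin G1 G2 v1 v2).Winnable (Sum.elim D1 D2) := by
  rw [winnable_iff_exists_effective_add_div]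
  rintro ⟨f, hf⟩
  rcases le_total (f (Sum.inr v2)) (f (Sum.inl v1)) with hle | hle
  · exact h1 (winnable_iff_exists_effective_add_div.2 ⟨_, hf.restrict_inl_of_bridgeJoin hle⟩)
  · exact h2 (winnable_iff_exists_effective_add_div.2 ⟨_, hf.restrict_inr_of_bridgeJoin hle⟩)

end BridgeJoin

theorem statement_10_general {V1 V2 : Type} [Fintype V1] [DecidableEq V1] [Fintype V2] [DecidableEq V2]
    (G1 : MultiGraph V1) (G2 : MultiGraph V2)
    (v1 : V1) (v2 : V2) (d : V1 ⊕ V2 → ℤ) (e1 : V1 → ℤ) (e2 : V2 → ℤ)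
    (he1 : Effective e1) (he2 : Effective e2)
    (hdeg1 : deg e1 = G1.rank (d ∘ Sum.inl) + 1)
    (hdeg2 : deg e2 = G2.rank (d ∘ Sum.inr) + 1)
    (hr1 : G1.rank (d ∘ Sum.inl - e1) = -1)
    (hr2 : G2.rank (d ∘ Sum.inr - e2) = -1) :
    (bridgeJoin G1 G2 v1 v2).rank (d - Sum.elim e1 (0 : V2 → ℤ) - Sum.elim (0 : V1 → ℤ) e2) = -1 ∧
    (bridgeJoin G1 G2 v1 v2).rank d ≤
      G1.rank (d ∘ Sum.inl) + G2.rank (d ∘ Sum.inr) + 1 := by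
  have hsplit : d - Sum.elim e1 e2 = Sum.elim (d ∘ Sum.inl - e1) (d ∘ Sum.inr - e2) := by
    ext (u | w) <;> rfl
  have hnw : ¬ (bridgeJoin G1 G2 v1 v2).Winnable (d - Sum.elim e1 e2) := by
    rw [hsplit]
    exact not_winnable_bridgeJoin_sumElim (rank_eq_neg_one_iff.1 hr1) (rank_eq_neg_one_iff.1 hr2)
  constructor
  · have hjoin :
        d - Sum.elim e1 (0 : V2 → ℤ) - Sum.elim (0 : V1 → ℤ) e2 = d - Sum.elim e1 e2 := by
      ext (u | w) <;> simp
    rw [hjoin]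
    exact rank_eq_neg_one_iff.2 hnw
  · have hlt := rank_lt_deg_of_not_winnable_sub (he1.sumElim he2) hnw
    rw [deg_sumElim] at hlt
    omega

/-- key step in the proof of the bridge inequality. -/
theorem statement_10 {V1 V2 : Type} [Fintype V1] [DecidableEq V1] [Fintype V2] [DecidableEq V2]
    (G1 : MultiGraph V1) (G2 : MultiGraph V2)
    (hl1 : G1.Loopless) (hl2 : G2.Loopless)
    (hc1 : G1.Connected) (hc2 : G2.Connected)
    (v1 : V1) (v2 : V2) (d : V1 ⊕ V2 → ℤ) (e1 : V1 → ℤ) (e2 : V2 → ℤ)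
    (he1 : Effective e1) (he2 : Effective e2)
    (hdeg1 : deg e1 = G1.rank (d ∘ Sum.inl) + 1)
    (hdeg2 : deg e2 = G2.rank (d ∘ Sum.inr) + 1)
    (hr1 : G1.rank (d ∘ Sum.inl - e1) = -1)
    (hr2 : G2.rank (d ∘ Sum.inr - e2) = -1) :
    (bridgeJoin G1 G2 v1 v2).rank (d - Sum.elim e1 (0 : V2 → ℤ) - Sum.elim (0 : V1 → ℤ) e2) = -1 ∧
    (bridgeJoin G1 G2 v1 v2).rank d ≤
      G1.rank (d ∘ Sum.inl) + G2.rank (d ∘ Sum.inr) + 1 :=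
  statement_10_general G1 G2 v1 v2 d e1 e2 he1 he2 hdeg1 hdeg2 hr1 hr2

end BN
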